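/- arXiv:1902.00971 — 4 statements merged into one kernel-verified Lean document; each statement's English description precedes it below -/
import Mathlib

section
/- Let conv(x₀,…,xₘ) ⊆ ℝⁿ be a Farey-regular m-simplex. If conv(y₀,…,y_e) ⊆ ℝⁿ is a Farey-regular e-simplex with aff(y₀,…,y_e) = aff(x₀,…,x_e), then e ≤ m and conv(y₀,…,y_e,x_{e+1},…,xₘ) is a Farey-regular m-simplex. -/
open scoped BigOperators

noncomputable section

/-- Embedding of a rational point of ℚⁿ into ℝⁿ. -/
def toR {n : ℕ} (x : Fin n → ℚ) : Fin n → ℝ := fun i => (x i : ℝ)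

/-- Least common denominator of a rational point. -/
def den {n : ℕ} (x : Fin n → ℚ) : ℕ := Finset.univ.lcm fun i => (x i).den

/-- Homogeneous correspondent x̃ = (den(x)·x, den(x)) ∈ ℤ^{n+1}. -/
def homog {n : ℕ} (x : Fin n → ℚ) : Fin (n + 1) → ℤ :=
  Fin.snoc (fun i => ((den x : ℚ) * x i).num) (den x)

/-- A rational d-simplex, given by its vertices, is Farey-regular if the vertices are
affinely independent and their homogeneous correspondents extend to a ℤ-basis of ℤ^{n+1}. -/
def IsFareyRegular {n d : ℕ} (v : Fin (d + 1) → Fin n → ℚ) : Prop :=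
  AffineIndependent ℝ (fun i => toR (v i)) ∧
  ∃ (b : Module.Basis (Fin (n + 1)) ℤ (Fin (n + 1) → ℤ)) (ι : Fin (d + 1) → Fin (n + 1)),
    Function.Injective ι ∧ ∀ i, b (ι i) = homog (v i)

/-- A rational segment conv(a,b) is Farey-regular. -/
def SegRegular {n : ℕ} (a b : Fin n → ℚ) : Prop := IsFareyRegular ![a, b]

/-- Maps in GL(n,ℤ) ⋉ ℤⁿ : x ↦ Mx + t with M an integer matrix with det ±1. -/
def IsUnimodularAffine {n : ℕ} (γ : (Fin n → ℝ) → Fin n → ℝ) : Prop :=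
  ∃ (M : Matrix (Fin n) (Fin n) ℤ) (t : Fin n → ℤ), IsUnit M.det ∧
    ∀ x, γ x = fun i => (∑ j, (M i j : ℝ) * x j) + (t i : ℝ)

/-- A rational affine space: an intersection of rational affine hyperplanes of ℝⁿ. -/
def IsRatAffineSpace {n : ℕ} (F : Set (Fin n → ℝ)) : Prop :=
  ∃ (ι : Type) (p : ι → Fin n → ℚ) (c : ι → ℚ), (∀ i, p i ≠ 0) ∧
    F = ⋂ i, {z | (∑ j, (p i j : ℝ) * z j) = (c i : ℝ)}

/-- Affine dimension of a subset of ℝⁿ. -/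
def affDim {n : ℕ} (F : Set (Fin n → ℝ)) : ℕ :=
  Module.finrank ℝ (vectorSpan ℝ F)

/-- d_F: least denominator of a rational point of F. -/
def dF {n : ℕ} (F : Set (Fin n → ℝ)) : ℕ :=
  sInf {d | ∃ v : Fin n → ℚ, toR v ∈ F ∧ den v = d}

/-- c_F: least denominator of a rational point v such that conv(v,v₀,…,v_e) is a
Farey-regular (e+1)-simplex for some v₀,…,v_e ∈ F ∩ ℚⁿ (e = dim F < n); c_F = 1 if dim F = n. -/
def cF {n : ℕ} (F : Set (Fin n → ℝ)) : ℕ :=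
  if affDim F = n then 1 else
  sInf {c | ∃ (v : Fin n → ℚ) (w : Fin (affDim F + 1) → Fin n → ℚ),
    (∀ i, toR (w i) ∈ F) ∧ IsFareyRegular (Fin.cons v w) ∧ den v = c}

/-- Euclidean distance on ℝⁿ. -/
def eudist {n : ℕ} (x y : Fin n → ℝ) : ℝ := Real.sqrt (∑ i, (x i - y i) ^ 2)

/-- The sequence a = x₀, x₁, …, x_{u+1} = b of consecutive vertices of the
Hirzebruch–Jung triangulation of the rational segment conv(a,b): each x_{i+1} is the
farthest rational point z from xᵢ in conv(a,b) such that conv(xᵢ,z) is Farey-regular. -/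
def IsHJSeq {n : ℕ} (a b : Fin n → ℚ) {u : ℕ} (x : Fin (u + 2) → Fin n → ℚ) : Prop :=
  x 0 = a ∧ x (Fin.last (u + 1)) = b ∧
  ∀ i : Fin (u + 1),
    toR (x i.succ) ∈ segment ℝ (toR a) (toR b) ∧
    SegRegular (x i.castSucc) (x i.succ) ∧
    ∀ z : Fin n → ℚ, toR z ∈ segment ℝ (toR a) (toR b) →
      SegRegular (x i.castSucc) z →
      eudist (toR z) (toR (x i.castSucc)) ≤ eudist (toR (x i.succ)) (toR (x i.castSucc))

/-- A regular triangulation of the rational segment conv(a,b), described by its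
consecutive vertices a = y₀, …, y_{k+1} = b: consecutive 1-simplexes are Farey-regular. -/
def IsRegTriSeq {n : ℕ} (a b : Fin n → ℚ) {k : ℕ} (y : Fin (k + 2) → Fin n → ℚ) : Prop :=
  y 0 = a ∧ y (Fin.last (k + 1)) = b ∧
  ∀ i : Fin (k + 1),
    toR (y i.succ) ∈ segment ℝ (toR (y i.castSucc)) (toR b) ∧
    SegRegular (y i.castSucc) (y i.succ)

/-- A rational half-line with rational origin v: {v + t(w - v) : t ≥ 0} for some rational w ≠ v. -/
def IsRatHalfLine {n : ℕ} (H : Set (Fin n → ℝ)) (v : Fin n → ℚ) : Prop :=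
  ∃ w : Fin n → ℚ, w ≠ v ∧
    H = {P | ∃ t : ℝ, 0 ≤ t ∧ P = fun i => toR v i + t * (toR w i - toR v i)}
/-!
The homogeneous correspondents of `x₀, …, x_e` are part of a basis `b` of `ℤ^{n+1}`, and those of
`y₀, …, y_e` span the same real subspace, since the two simplexes have the same affine span. A
subset of a `ℤ`-basis spans a pure sublattice, so both families also span the same lattice, and
the `ỹⱼ` can replace the `x̃ⱼ` in `b`. Affine independence of the new vertices is automatic: the
homogeneous correspondents of a Farey-regular simplex are linearly independent over `ℝ`.
-/

open Module Set Submodule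

section IntegralLattice

variable {ι κ : Type*} (K : Type*) [CommRing K] [Fintype ι]

def LinearMap.extendScalarsInt (g : (ι → ℤ) →ₗ[ℤ] ℤ) : (ι → K) →ₗ[K] K :=
  ∑ i, (g (Pi.basisFun ℤ ι i) : K) • LinearMap.proj i

theorem LinearMap.extendScalarsInt_intCast (g : (ι → ℤ) →ₗ[ℤ] ℤ) (u : ι → ℤ) :
    g.extendScalarsInt K (Int.cast ∘ u) = g u := by
  classical
  rw [g.pi_apply_eq_sum_univ u, extendScalarsInt]
  simp only [LinearMap.coe_sum, Finset.sum_apply, LinearMap.smul_apply, LinearMap.coe_proj,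
    Function.comp_apply, Function.eval, smul_eq_mul, Pi.basisFun_apply, Int.cast_sum,
    Int.cast_mul, mul_comm]
  congr! with i
  simp [Pi.single_apply, eq_comm]

theorem Module.Basis.linearIndependent_intCast (b : Basis κ ℤ (ι → ℤ)) :
    LinearIndependent K fun j => (Int.cast ∘ b j : ι → K) := by
  classical
  rw [linearIndependent_iff']
  intro s c hc i hi
  have := congrArg ((b.coord i).extendScalarsInt K) hc
  simpa [map_sum, LinearMap.extendScalarsInt_intCast, Finsupp.single_apply, hi] using this

/-- Sublattices spanned by part of a basis of `ℤ^ι` are pure. -/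
theorem Module.Basis.mem_span_of_intCast_mem_span [CharZero K] (b : Basis κ ℤ (ι → ℤ))
    {ν : Type*} (σ : ν → κ) {v : ι → ℤ}
    (hv : (Int.cast ∘ v : ι → K) ∈ span K (range fun j => (Int.cast ∘ b (σ j) : ι → K))) :
    v ∈ span ℤ (range (b ∘ σ)) := by
  classical
  rw [range_comp, b.mem_span_image]
  intro t ht
  by_contra hts
  let f := (b.coord t).extendScalarsInt K
  have hf : span K (range fun j => (Int.cast ∘ b (σ j) : ι → K)) ≤ LinearMap.ker f := by
    rw [span_le]
    rintro _ ⟨j, rfl⟩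
    have hσt : σ j ≠ t := fun h => hts ⟨j, h⟩
    simp [f, LinearMap.extendScalarsInt_intCast, hσt]
  have hvt : (b.repr v t : K) = 0 := by
    simpa [f, LinearMap.extendScalarsInt_intCast] using hf hv
  exact (Finsupp.mem_support_iff.mp ht) (by exact_mod_cast hvt)

end IntegralLattice

theorem Module.Basis.exists_eq_of_span_eq {R M ι κ : Type*} [Ring R] [AddCommGroup M]
    [Module R M] (b : Basis ι R M) {σ : κ → ι} (hσ : Function.Injective σ) {w : κ → M}
    (hw : LinearIndependent R w) (hspan : span R (range w) = span R (range (b ∘ σ))) :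
    ∃ b' : Basis ι R M, (∀ j, b' (σ j) = w j) ∧ ∀ t ∉ range σ, b' t = b t := by
  classical
  let v : κ ⊕ ↥(range σ)ᶜ → M := Sum.elim w fun t => b t
  have hcompl : range (fun t : ↥(range σ)ᶜ => b t) = b '' (range σ)ᶜ :=
    (range_comp b Subtype.val).trans (by rw [Subtype.range_coe])
  have hli : LinearIndependent R v := by
    refine hw.sum_type (b.linearIndependent.comp _ Subtype.val_injective) ?_
    rw [hspan, hcompl, range_comp]
    exact b.linearIndependent.disjoint_span_image disjoint_compl_right
  have hsp : ⊤ ≤ span R (range v) := by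
    rw [← b.span_eq, Sum.elim_range, span_union, hspan, hcompl, range_comp, ← span_union,
      image_union_image_compl_eq_range]
  let τ : κ ⊕ ↥(range σ)ᶜ ≃ ι :=
    (Equiv.sumCongr (Equiv.ofInjective σ hσ) (Equiv.refl _)).trans (Equiv.Set.sumCompl _)
  refine ⟨(Basis.mk hli hsp).reindex τ, fun j => ?_, fun t ht => ?_⟩
  · have : τ.symm (σ j) = Sum.inl j := by
      rw [Equiv.symm_apply_eq]; simp [τ, Equiv.Set.sumCompl_apply_inl]
    rw [Basis.reindex_apply, this, Basis.mk_apply]; rfl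
  · have : τ.symm t = Sum.inr ⟨t, ht⟩ := by
      rw [Equiv.symm_apply_eq]; simp [τ, Equiv.Set.sumCompl_apply_inr]
    rw [Basis.reindex_apply, this, Basis.mk_apply]; rfl

theorem AffineIndependent.le_of_affineSpan_le {k V P : Type*} [DivisionRing k] [AddCommGroup V]
    [Module k V] [AddTorsor V P] {e m : ℕ} {p : Fin (e + 1) → P} {q : Fin (m + 1) → P}
    (hp : AffineIndependent k p) (h : affineSpan k (range p) ≤ affineSpan k (range q)) :
    e ≤ m :=
  calc e = finrank k (vectorSpan k (range p)) :=
        (hp.finrank_vectorSpan (Fintype.card_fin _)).symm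
    _ ≤ finrank k (vectorSpan k (range q)) := by
      rw [← direction_affineSpan, ← direction_affineSpan]
      exact Submodule.finrank_mono (AffineSubspace.direction_le h)
    _ ≤ m := finrank_vectorSpan_range_le k q (Fintype.card_fin _)

theorem Fin.setOf_exists_le_eq_range_castLE {α : Type*} {e m : ℕ} (h : e + 1 ≤ m + 1)
    (f : Fin (m + 1) → α) :
    {a | ∃ i : Fin (m + 1), (i : ℕ) ≤ e ∧ a = f i} = range fun j => f (Fin.castLE h j) := by
  ext a
  constructor
  · rintro ⟨i, hi, rfl⟩
    exact ⟨⟨i, by omega⟩, rfl⟩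
  · rintro ⟨j, rfl⟩
    exact ⟨_, Nat.lt_succ_iff.mp j.isLt, rfl⟩

section Homogenization

variable {k : Type*} [Ring k] {n : ℕ} {ι : Type*}

theorem Finset.sum_smul_snoc (s : Finset ι) (w : ι → k) (p : ι → Fin n → k) (c : ι → k) :
    ∑ i ∈ s, w i • (Fin.snoc (p i) (c i) : Fin (n + 1) → k) =
      Fin.snoc (∑ i ∈ s, w i • p i) (∑ i ∈ s, w i * c i) := by
  funext t
  induction t using Fin.lastCases <;> simp [Finset.sum_apply]

theorem AffineIndependent.of_linearIndependent_snoc {p : ι → Fin n → k}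
    (h : LinearIndependent k fun j => (Fin.snoc (p j) 1 : Fin (n + 1) → k)) :
    AffineIndependent k p := by
  rw [affineIndependent_iff]
  intro s w hw0 hws
  refine linearIndependent_iff'.mp h s w ?_
  rw [Finset.sum_smul_snoc, hws]
  simp only [mul_one, hw0]
  funext t
  induction t using Fin.lastCases <;> simp

theorem snoc_one_mem_span_of_mem_affineSpan [Fintype ι] {p : Fin n → k} {q : ι → Fin n → k}
    (h : p ∈ affineSpan k (range q)) :
    (Fin.snoc p 1 : Fin (n + 1) → k) ∈
      span k (range fun j => (Fin.snoc (q j) 1 : Fin (n + 1) → k)) := by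
  obtain ⟨w, hw, hp⟩ := eq_affineCombination_of_mem_affineSpan_of_fintype h
  rw [Finset.affineCombination_eq_linear_combination _ _ _ hw] at hp
  have : (Fin.snoc p 1 : Fin (n + 1) → k) = ∑ j, w j • (Fin.snoc (q j) 1 : Fin (n + 1) → k) := by
    rw [Finset.sum_smul_snoc, ← hp]
    simp [hw]
  rw [this]
  exact sum_mem fun j _ => smul_mem _ _ (subset_span ⟨j, rfl⟩)

end Homogenization

section Farey

variable {n : ℕ}

theorem den_pos (x : Fin n → ℚ) : 0 < den x :=
  Nat.pos_of_ne_zero fun h => by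
    obtain ⟨i, -, hi⟩ := Finset.lcm_eq_zero_iff.mp h
    exact (x i).den_nz hi

theorem intCast_num_den_mul (x : Fin n → ℚ) (i : Fin n) :
    (((den x : ℚ) * x i).num : ℚ) = den x * x i := by
  obtain ⟨d, hd⟩ : (x i).den ∣ den x := Finset.dvd_lcm (Finset.mem_univ i)
  have : (den x : ℚ) * x i = ((d * (x i).num : ℤ) : ℚ) := by
    rw [hd]; push_cast
    rw [mul_comm ((x i).den : ℚ), mul_assoc, Rat.den_mul_eq_num]
  rw [this, Rat.num_intCast]

theorem intCast_homog (x : Fin n → ℚ) :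
    (Int.cast ∘ homog x : Fin (n + 1) → ℝ) = (den x : ℝ) • Fin.snoc (toR x) 1 := by
  funext i
  induction i using Fin.lastCases with
  | last => simp [homog]
  | cast i =>
    have h := congrArg (Rat.cast : ℚ → ℝ) (intCast_num_den_mul x i)
    push_cast at h
    simp [homog, toR, h]

theorem intCast_homog_mem_span_of_mem_affineSpan {ι : Type*} [Fintype ι] {v : Fin n → ℚ}
    {q : ι → Fin n → ℚ} (h : toR v ∈ affineSpan ℝ (range fun j => toR (q j))) :
    (Int.cast ∘ homog v : Fin (n + 1) → ℝ) ∈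
      span ℝ (range fun j => (Int.cast ∘ homog (q j) : Fin (n + 1) → ℝ)) := by
  have hden (w : Fin n → ℚ) : (den w : ℝ) ≠ 0 := by exact_mod_cast (den_pos w).ne'
  have hsnoc : span ℝ (range fun j => (Fin.snoc (toR (q j)) 1 : Fin (n + 1) → ℝ)) ≤
      span ℝ (range fun j => (Int.cast ∘ homog (q j) : Fin (n + 1) → ℝ)) := by
    rw [span_le]
    rintro _ ⟨j, rfl⟩
    show (Fin.snoc (toR (q j)) 1 : Fin (n + 1) → ℝ) ∈ _
    rw [← inv_smul_smul₀ (hden (q j)) (Fin.snoc _ _), ← intCast_homog]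
    exact smul_mem _ _ (subset_span ⟨j, rfl⟩)
  rw [intCast_homog]
  exact smul_mem _ _ (hsnoc (snoc_one_mem_span_of_mem_affineSpan h))

theorem span_homog_le_of_affineSpan_le {ι κ : Type*} [Fintype κ] {p : ι → Fin n → ℚ}
    {q : κ → Fin n → ℚ} (b : Basis (Fin (n + 1)) ℤ (Fin (n + 1) → ℤ)) {σ : κ → Fin (n + 1)}
    (hbσ : ∀ j, b (σ j) = homog (q j))
    (h : affineSpan ℝ (range fun i => toR (p i)) ≤ affineSpan ℝ (range fun j => toR (q j))) :
    span ℤ (range fun i => homog (p i)) ≤ span ℤ (range fun j => homog (q j)) := by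
  rw [span_le]
  rintro _ ⟨i, rfl⟩
  rw [show (fun j => homog (q j)) = b ∘ σ from funext fun j => (hbσ j).symm]
  refine b.mem_span_of_intCast_mem_span ℝ σ ?_
  simp only [hbσ]
  exact intCast_homog_mem_span_of_mem_affineSpan (h (subset_affineSpan ℝ _ ⟨i, rfl⟩))

theorem isFareyRegular_of_basis {d : ℕ} {v : Fin (d + 1) → Fin n → ℚ}
    (b : Basis (Fin (n + 1)) ℤ (Fin (n + 1) → ℤ)) {ι : Fin (d + 1) → Fin (n + 1)}
    (hι : Function.Injective ι) (hbι : ∀ i, b (ι i) = homog (v i)) : IsFareyRegular v := by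
  refine ⟨AffineIndependent.of_linearIndependent_snoc ?_, b, ι, hι, hbι⟩
  have hden (i : Fin (d + 1)) : (den (v i) : ℝ) ≠ 0 := by exact_mod_cast (den_pos (v i)).ne'
  have hsnoc : (fun i => (Fin.snoc (toR (v i)) 1 : Fin (n + 1) → ℝ)) =
      (fun i => (Units.mk0 _ (hden i))⁻¹) •
        fun i => (Int.cast ∘ b (ι i) : Fin (n + 1) → ℝ) := by
    funext i
    simp only [Pi.smul_apply', hbι, intCast_homog]
    rw [Units.smul_def, Units.val_inv_eq_inv_val, Units.val_mk0, inv_smul_smul₀ (hden i)]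
  rw [hsnoc]
  exact ((b.linearIndependent_intCast ℝ).comp ι hι).units_smul _

end Farey

/-- Steinitz exchange for Farey-regular simplexes: if conv(x₀,…,xₘ) is a Farey-regular
m-simplex and conv(y₀,…,y_e) is a Farey-regular e-simplex with
aff(y₀,…,y_e) = aff(x₀,…,x_e), then e ≤ m and conv(y₀,…,y_e,x_{e+1},…,xₘ) is a
Farey-regular m-simplex. -/
theorem steinitz_farey_regular {n m e : ℕ}
    (x : Fin (m + 1) → Fin n → ℚ) (y : Fin (e + 1) → Fin n → ℚ)
    (hx : IsFareyRegular x) (hy : IsFareyRegular y)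
    (haff : affineSpan ℝ (Set.range fun i => toR (y i)) =
      affineSpan ℝ {P | ∃ i : Fin (m + 1), (i : ℕ) ≤ e ∧ P = toR (x i)}) :
    ∃ _ : e ≤ m,
      IsFareyRegular (fun i : Fin (m + 1) =>
        if hi : (i : ℕ) ≤ e then y ⟨(i : ℕ), Nat.lt_succ_of_le hi⟩ else x i) := by
  obtain ⟨-, b, ι, hι, hbι⟩ := hx
  obtain ⟨hyInd, c, κ, hκ, hcκ⟩ := hy
  have hem : e ≤ m := hyInd.le_of_affineSpan_le <| haff.trans_le <|
    affineSpan_mono ℝ (by rintro _ ⟨i, -, rfl⟩; exact ⟨i, rfl⟩)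
  let xₑ : Fin (e + 1) → Fin n → ℚ := fun j => x (Fin.castLE (by omega) j)
  have haffₑ : affineSpan ℝ (range fun j => toR (y j)) =
      affineSpan ℝ (range fun j => toR (xₑ j)) := by
    rw [haff, Fin.setOf_exists_le_eq_range_castLE]
  have hspan : span ℤ (range fun j => homog (y j)) = span ℤ (range fun j => homog (xₑ j)) :=
    le_antisymm (span_homog_le_of_affineSpan_le b (fun j => hbι _) haffₑ.le)
      (span_homog_le_of_affineSpan_le c hcκ haffₑ.ge)
  have hliY : LinearIndependent ℤ fun j => homog (y j) := by
    rw [show (fun j => homog (y j)) = c ∘ κ from funext fun j => (hcκ j).symm]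
    exact c.linearIndependent.comp κ hκ
  obtain ⟨b', hb'σ, hb'⟩ := b.exists_eq_of_span_eq (hι.comp (Fin.castLE_injective _)) hliY
    (hspan.trans (congrArg (fun f => span ℤ (range f)) (funext fun j => (hbι _).symm)))
  refine ⟨hem, isFareyRegular_of_basis b' hι fun i => ?_⟩
  by_cases hi : (i : ℕ) ≤ e
  · rw [dif_pos hi]
    exact hb'σ ⟨i, Nat.lt_succ_of_le hi⟩
  · rw [dif_neg hi, hb' _ ?_, hbι]
    rintro ⟨j, hj⟩
    have hji : (j : ℕ) = i := congrArg Fin.val (hι hj)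
    exact hi (hji ▸ Nat.lt_succ_iff.mp j.isLt)
end
end

section
/- Let v₀ ∈ ℚ with den(v₀) ≥ 2, and suppose s ∈ ℚ is such that conv(v₀,s) is a Farey-regular 1-simplex in ℝ and den(s) ≤ den(v₀)/2. Then there is no rational r with conv(v₀,r) Farey-regular and den(r) < den(s). -/
/-- In ℝ¹, with x̃ = (x.num, x.den): if den(v₀) ≥ 2 and conv(v₀,s) is a Farey-regular
1-simplex (|det(ṽ₀,s̃)| = 1) with den(s) ≤ den(v₀)/2, then there is no rational r with
conv(v₀,r) Farey-regular and den(r) < den(s). -/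
theorem one_dim_minimal_denominator (v₀ s : ℚ)
    (hv : 2 ≤ v₀.den)
    (hreg : (v₀.num * (s.den : ℤ) - s.num * (v₀.den : ℤ)).natAbs = 1)
    (hs : (s.den : ℚ) ≤ (v₀.den : ℚ) / 2) :
    ¬ ∃ r : ℚ, (v₀.num * (r.den : ℤ) - r.num * (v₀.den : ℤ)).natAbs = 1 ∧
        r.den < s.den := by
  rintro ⟨r, hr, hlt⟩
  set e1 : ℤ := v₀.num * (s.den : ℤ) - s.num * (v₀.den : ℤ) with he1
  set e2 : ℤ := v₀.num * (r.den : ℤ) - r.num * (v₀.den : ℤ) with he2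
  have hd : e1 * r.den - e2 * s.den = (v₀.den : ℤ) * (r.num * s.den - s.num * r.den) := by
    rw [he1, he2]; ring
  have hsd : 2 * (s.den : ℤ) ≤ (v₀.den : ℤ) := by
    have : (2 : ℚ) * (s.den : ℚ) ≤ (v₀.den : ℚ) := by linarith
    exact_mod_cast this
  have hne : e1 * r.den - e2 * s.den ≠ 0 := by
    intro h
    rw [sub_eq_zero] at h
    have : (e1 * r.den).natAbs = (e2 * s.den).natAbs := by rw [h]
    simp only [Int.natAbs_mul, hreg, hr, Int.natAbs_natCast, one_mul] at this
    omega
  have habs1 : |e1| = 1 := by rw [Int.abs_eq_natAbs, hreg]; rfl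
  have habs2 : |e2| = 1 := by rw [Int.abs_eq_natAbs, hr]; rfl
  have hub : |e1 * r.den - e2 * s.den| ≤ (r.den : ℤ) + s.den := by
    calc |e1 * r.den - e2 * s.den| ≤ |e1 * r.den| + |e2 * s.den| := abs_sub _ _
    _ = (r.den : ℤ) + s.den := by
        rw [abs_mul, abs_mul, habs1, habs2, one_mul, one_mul,
          abs_of_nonneg (by positivity), abs_of_nonneg (by positivity)]
  have hdvd : (v₀.den : ℤ) ∣ |e1 * r.den - e2 * s.den| :=
    (dvd_abs _ _).mpr ⟨_, hd⟩
  have hle := Int.le_of_dvd (abs_pos.mpr hne) hdvd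
  have : (r.den : ℤ) < s.den := by exact_mod_cast hlt
  omega
end

section
/- Given Farey-regular n-simplexes conv(v₀,…,vₙ) and conv(w₀,…,wₙ) in ℝⁿ with den(vᵢ) = den(wᵢ) for all i, there is a unique map γ ∈ GL(n,ℤ) ⋉ ℤⁿ with γ(vᵢ) = wᵢ for each i = 0,…,n. -/
open scoped BigOperators

noncomputable section

/-!
The homogeneous correspondents ṽᵢ and w̃ᵢ are two ℤ-bases of ℤⁿ⁺¹, so a unique
T ∈ GL(n+1, ℤ) sends ṽᵢ to w̃ᵢ. Since den vᵢ = den wᵢ, T fixes the last coordinate on a basis,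
hence everywhere; its matrix is therefore the block matrix (M t; 0 1) with det M = det T = ±1,
and dehomogenizing T ṽᵢ = w̃ᵢ gives M vᵢ + t = wᵢ. Uniqueness holds because an affine map of ℝⁿ
is determined by its values at n + 1 affinely independent points.
-/

namespace Matrix

variable {R : Type*} [CommRing R] {n : ℕ}

theorem det_eq_det_submatrix_castSucc_of_row_last_eq_single
    (A : Matrix (Fin (n + 1)) (Fin (n + 1)) R)
    (hA : A (Fin.last n) = Pi.single (Fin.last n) 1) :
    A.det = (A.submatrix Fin.castSucc Fin.castSucc).det := by
  rw [det_succ_row A (Fin.last n), Finset.sum_eq_single (Fin.last n)]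
  · simp [hA, Fin.succAbove_last, ← two_mul, pow_mul]
  · intro j _ hj
    simp [hA, hj]
  · simp

theorem mulVec_castSucc (A : Matrix (Fin (n + 1)) (Fin (n + 1)) R) (x : Fin (n + 1) → R)
    (i : Fin (n + 1)) :
    (A *ᵥ x) i = ∑ j : Fin n, A i j.castSucc * x j.castSucc + A i (Fin.last n) * x (Fin.last n) :=
  Fin.sum_univ_castSucc _

end Matrix

theorem LinearEquiv.isUnit_det_toMatrix'_submatrix_castSucc {R : Type*} [CommRing R] {n : ℕ}
    (T : (Fin (n + 1) → R) ≃ₗ[R] (Fin (n + 1) → R))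
    (hT : ∀ x, T x (Fin.last n) = x (Fin.last n)) :
    IsUnit ((LinearMap.toMatrix' (T : (Fin (n + 1) → R) →ₗ[R] _)).submatrix
      Fin.castSucc Fin.castSucc).det := by
  rw [← Matrix.det_eq_det_submatrix_castSucc_of_row_last_eq_single, LinearMap.det_toMatrix']
  · exact T.isUnit_det'
  · funext j
    simp [LinearMap.toMatrix'_apply, hT, Pi.single_apply, eq_comm]

theorem den_ne_zero {n : ℕ} (x : Fin n → ℚ) : den x ≠ 0 := by
  simp [den, Finset.lcm_eq_zero_iff]

theorem homog_castSucc {n : ℕ} (x : Fin n → ℚ) (j : Fin n) :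
    (homog x j.castSucc : ℚ) = den x * x j := by
  obtain ⟨c, hc⟩ : (x j).den ∣ den x := Finset.dvd_lcm (Finset.mem_univ j)
  have : (den x : ℚ) * x j = (c * (x j).num : ℤ) := by
    rw [hc, Nat.cast_mul, mul_comm ((x j).den : ℚ), mul_assoc, Rat.den_mul_eq_num]
    push_cast; ring
  rw [homog, Fin.snoc_castSucc, this, Rat.num_intCast]

theorem homog_last {n : ℕ} (x : Fin n → ℚ) : homog x (Fin.last n) = den x := by
  simp [homog]

theorem IsFareyRegular.exists_basis_eq_homog {n : ℕ} {v : Fin (n + 1) → Fin n → ℚ}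
    (hv : IsFareyRegular v) :
    ∃ b : Module.Basis (Fin (n + 1)) ℤ (Fin (n + 1) → ℤ), ∀ i, b i = homog (v i) := by
  obtain ⟨-, b, ι, hι, hb⟩ := hv
  let e := Equiv.ofBijective ι (Finite.injective_iff_bijective.mp hι)
  exact ⟨b.reindex e.symm, fun i => by simp [e, hb]⟩

theorem exists_linearEquiv_map_homog {n : ℕ} {v w : Fin (n + 1) → Fin n → ℚ}
    (hv : IsFareyRegular v) (hw : IsFareyRegular w) (hden : ∀ i, den (v i) = den (w i)) :
    ∃ T : (Fin (n + 1) → ℤ) ≃ₗ[ℤ] (Fin (n + 1) → ℤ),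
      (∀ i, T (homog (v i)) = homog (w i)) ∧ ∀ x, T x (Fin.last n) = x (Fin.last n) := by
  obtain ⟨bv, hbv⟩ := hv.exists_basis_eq_homog
  obtain ⟨bw, hbw⟩ := hw.exists_basis_eq_homog
  let T := bv.equiv bw (Equiv.refl _)
  have hT : ∀ i, T (homog (v i)) = homog (w i) := fun i => by
    simp [T, ← hbv, ← hbw]
  refine ⟨T, hT, fun x => LinearMap.congr_fun (bv.ext fun i => ?_ :
    (LinearMap.proj (Fin.last n)).comp (T : _ →ₗ[ℤ] _) = LinearMap.proj (Fin.last n)) x⟩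
  simp [hbv, hT, homog_last, hden]

open Matrix in
theorem affine_eq_of_mulVec_homog {n : ℕ} (A : Matrix (Fin (n + 1)) (Fin (n + 1)) ℤ)
    {x y : Fin n → ℚ} (hxy : den x = den y) (h : A *ᵥ homog x = homog y) (i : Fin n) :
    ∑ j, (A i.castSucc j.castSucc : ℚ) * x j + A i.castSucc (Fin.last n) = y i := by
  have hi := congrArg (fun z => (z i.castSucc : ℚ)) h
  simp only [Matrix.mulVec_castSucc, Int.cast_add, Int.cast_sum, Int.cast_mul, homog_castSucc,
    homog_last, Int.cast_natCast, ← hxy] at hi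
  have hd : (den x : ℚ) ≠ 0 := Nat.cast_ne_zero.mpr (den_ne_zero x)
  apply mul_left_cancel₀ hd
  rw [← hi, mul_add, Finset.mul_sum]
  congr 1
  · exact Finset.sum_congr rfl fun j _ => by ring
  · ring

theorem IsUnimodularAffine.exists_affineMap {n : ℕ} {γ : (Fin n → ℝ) → Fin n → ℝ}
    (hγ : IsUnimodularAffine γ) : ∃ f : (Fin n → ℝ) →ᵃ[ℝ] (Fin n → ℝ), ⇑f = γ := by
  obtain ⟨M, t, -, hγ⟩ := hγ
  refine ⟨(M.map (Int.cast : ℤ → ℝ)).toLin'.toAffineMap +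
    AffineMap.const ℝ _ (fun i => (t i : ℝ)), ?_⟩
  funext x i
  simp [hγ, Matrix.mulVec, dotProduct]

theorem IsUnimodularAffine.eq_of_affineIndependent {n : ℕ} {γ₁ γ₂ : (Fin n → ℝ) → Fin n → ℝ}
    (h₁ : IsUnimodularAffine γ₁) (h₂ : IsUnimodularAffine γ₂) {p : Fin (n + 1) → Fin n → ℝ}
    (hp : AffineIndependent ℝ p) (h : ∀ i, γ₁ (p i) = γ₂ (p i)) : γ₁ = γ₂ := by
  obtain ⟨f₁, rfl⟩ := h₁.exists_affineMap
  obtain ⟨f₂, rfl⟩ := h₂.exists_affineMap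
  have hspan : affineSpan ℝ (Set.range p) = ⊤ :=
    hp.affineSpan_eq_top_iff_card_eq_finrank_add_one.mpr (by simp)
  exact congrArg _ (AffineMap.ext_on hspan (Set.forall_mem_range.mpr h))

/-- Given Farey-regular n-simplexes conv(v₀,…,vₙ) and conv(w₀,…,wₙ) in ℝⁿ with
den(vᵢ) = den(wᵢ) for all i, there is a unique γ ∈ GL(n,ℤ) ⋉ ℤⁿ with γ(vᵢ) = wᵢ. -/
theorem unique_unimodular_affine_map {n : ℕ}
    (v w : Fin (n + 1) → Fin n → ℚ)
    (hv : IsFareyRegular v) (hw : IsFareyRegular w)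
    (hden : ∀ i, den (v i) = den (w i)) :
    ∃! γ : (Fin n → ℝ) → Fin n → ℝ,
      IsUnimodularAffine γ ∧ ∀ i, γ (toR (v i)) = toR (w i) := by
  obtain ⟨T, hTv, hTlast⟩ := exists_linearEquiv_map_homog hv hw hden
  set A := LinearMap.toMatrix' (T : (Fin (n + 1) → ℤ) →ₗ[ℤ] (Fin (n + 1) → ℤ))
  set γ : (Fin n → ℝ) → Fin n → ℝ :=
    fun x i => ∑ j, (A i.castSucc j.castSucc : ℝ) * x j + A i.castSucc (Fin.last n)
  have hγ : IsUnimodularAffine γ :=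
    ⟨A.submatrix Fin.castSucc Fin.castSucc, fun i => A i.castSucc (Fin.last n),
      T.isUnit_det_toMatrix'_submatrix_castSucc hTlast, fun _ => rfl⟩
  have hγv : ∀ k, γ (toR (v k)) = toR (w k) := fun k => by
    funext i
    have hAv := affine_eq_of_mulVec_homog A (hden k)
      (by rw [LinearMap.toMatrix'_mulVec]; exact hTv k) i
    simp only [γ, toR]
    exact_mod_cast hAv
  exact ⟨γ, ⟨hγ, hγv⟩, fun γ' ⟨hγ', hγ'v⟩ =>
    hγ'.eq_of_affineIndependent hγ hv.1 fun k => (hγ'v k).trans (hγv k).symm⟩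
end
end

section
/- Let the x-axis L ⊆ ℝ², v = (3/5, 0), and M the line through v and (1,1). Let L' be the half-line of L from v in the positive x direction, L'' the opposite half-line, M' the half-line of M from v into the first quadrant, and M'' the opposite half-line. Then no γ ∈ GL(2,ℤ) ⋉ ℤ² maps L' onto L'' and M' onto M'' (i.e., the vertical angles (L',M') and (L'',M'') do not have the same orbit). -/
open scoped BigOperators

noncomputable section

/-!
A map γ carrying L' onto L'' preserves the x-axis, so its matrix has `M 1 0 = 0`; unimodularity
then forces `M 0 0 = ±1`, and reversing the direction of the half-line makes it `-1`. Hence γ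
acts on the x-axis as `x ↦ -x + t₀` and must fix the common origin `3/5`, giving `t₀ = 6/5 ∉ ℤ`.
-/

open Set

section AffineImage

variable {K : Type*} [Field K] [LinearOrder K] [IsStrictOrderedRing K]

theorem slope_neg_and_apply_eq_of_image_Ici_eq_Iic {a b c d : K}
    (h : (fun x => a * x + b) '' Ici c = Iic d) : a < 0 ∧ a * c + b = d := by
  have hc : a * c + b ∈ Iic d := h ▸ mem_image_of_mem _ self_mem_Ici
  have ha : a < 0 := by
    by_contra! ha
    obtain ⟨x, hx, hxy⟩ : a * c + b - 1 ∈ (fun x => a * x + b) '' Ici c :=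
      h ▸ (show a * c + b - 1 ≤ d by linarith [mem_Iic.mp hc])
    nlinarith [mem_Ici.mp hx]
  obtain ⟨x, hx, hxd⟩ : d ∈ (fun x => a * x + b) '' Ici c := h ▸ self_mem_Iic
  exact ⟨ha, le_antisymm hc (by nlinarith [mem_Ici.mp hx])⟩

theorem setOf_add_nonneg_eq_image_Ici (c : K) :
    {P : Fin 2 → K | ∃ t : K, 0 ≤ t ∧ P = ![c + t, 0]} = (fun x => ![x, 0]) '' Ici c := by
  ext P
  constructor
  · rintro ⟨t, ht, rfl⟩
    exact ⟨c + t, by simpa using ht, rfl⟩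
  · rintro ⟨x, hx, rfl⟩
    exact ⟨x - c, sub_nonneg.mpr hx, by simp⟩

theorem setOf_sub_nonneg_eq_image_Iic (c : K) :
    {P : Fin 2 → K | ∃ t : K, 0 ≤ t ∧ P = ![c - t, 0]} = (fun x => ![x, 0]) '' Iic c := by
  ext P
  constructor
  · rintro ⟨t, ht, rfl⟩
    exact ⟨c - t, by simpa using ht, rfl⟩
  · rintro ⟨x, hx, rfl⟩
    exact ⟨c - x, sub_nonneg.mpr hx, by simp⟩

end AffineImage

theorem Matrix.isUnit_apply_zero_zero_of_apply_one_zero {R : Type*} [CommRing R]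
    {M : Matrix (Fin 2) (Fin 2) R} (hdet : IsUnit M.det) (hM : M 1 0 = 0) :
    IsUnit (M 0 0) := by
  rw [Matrix.det_fin_two, hM, mul_zero, sub_zero] at hdet
  exact isUnit_of_mul_isUnit_left hdet

/-- With v = (3/5,0), L',L'' the two half-lines of the x-axis at v, and M',M'' the two
half-lines at v of the line through v and (1,1): no γ ∈ GL(2,ℤ) ⋉ ℤ² maps L' onto L''
and M' onto M'', i.e., the vertical angles (L',M') and (L'',M'') do not have the same
orbit. -/
theorem vertical_angles_not_equivalent :
    ¬ ∃ γ : (Fin 2 → ℝ) → Fin 2 → ℝ, IsUnimodularAffine γ ∧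
      γ '' {P : Fin 2 → ℝ | ∃ t : ℝ, 0 ≤ t ∧ P = ![3 / 5 + t, 0]} =
        {P : Fin 2 → ℝ | ∃ t : ℝ, 0 ≤ t ∧ P = ![3 / 5 - t, 0]} ∧
      γ '' {P : Fin 2 → ℝ | ∃ t : ℝ, 0 ≤ t ∧ P = ![3 / 5 + t * (2 / 5), t]} =
        {P : Fin 2 → ℝ | ∃ t : ℝ, 0 ≤ t ∧ P = ![3 / 5 - t * (2 / 5), -t]} := by
  rintro ⟨γ, ⟨M, T, hdet, hγ⟩, hL, -⟩
  have hγx : ∀ x : ℝ, γ ![x, 0] = ![M 0 0 * x + T 0, M 1 0 * x + T 1] := by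
    intro x; rw [hγ]; ext i; fin_cases i <;> simp [Fin.sum_univ_two]
  rw [setOf_add_nonneg_eq_image_Ici, setOf_sub_nonneg_eq_image_Iic, image_image] at hL
  have hM10 : M 1 0 = 0 := by
    have hzero : ∀ x ∈ Ici (3 / 5 : ℝ), (M 1 0 : ℝ) * x + T 1 = 0 := fun x hx => by
      obtain ⟨y, -, hy⟩ := hL ▸ mem_image_of_mem (fun x => γ ![x, 0]) hx
      simpa [hγx] using (congrFun hy 1).symm
    have := hzero (8 / 5) (by norm_num [mem_Ici])
    have := hzero (3 / 5) self_mem_Ici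
    exact_mod_cast (show (M 1 0 : ℝ) = 0 by linarith)
  have hfirst := congrArg (image (· 0)) hL
  simp only [image_image, hγx, Matrix.cons_val_zero, image_id'] at hfirst
  obtain ⟨hneg, hfix⟩ := slope_neg_and_apply_eq_of_image_Ici_eq_Iic hfirst
  have hM00 : M 0 0 = -1 := by
    rcases Int.isUnit_iff.mp (Matrix.isUnit_apply_zero_zero_of_apply_one_zero hdet hM10) with h | h
    · rw [h] at hneg; norm_num at hneg
    · exact h
  rw [hM00] at hfix
  have : 5 * T 0 = 6 := by exact_mod_cast (show (5 * T 0 : ℝ) = 6 by push_cast at hfix; linarith)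
  omega
end
end
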